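/- The vacuum vector state tr(a) = ⟨a δ_e, δ_e⟩ is faithful on the von Neumann algebra M generated by the semicircular elements L_j + L_j*: if a ∈ M satisfies ⟨(a* ∘ a) δ_e, δ_e⟩ = 0, then a = 0. -/

import Mathlib

/-!
The right creation operators `R_j : δ_w ↦ δ_{w g_j}` commute with every `L_i`, and
`L_i* R_j - R_j L_i* = [i = j] ⟨δ_e, ·⟩ δ_e`. The latter being self-adjoint, the cross terms cancel
and `R_j + R_j*` commutes with every `L_i + L_i*`; hence it commutes with `a ∈ M`. The hypothesis
says `a δ_e = 0`, and induction on words through `δ_{w g_j} = (R_j + R_j*) δ_w - R_j* δ_w`, where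
`R_j* δ_w` is `0` or a shorter basis vector, gives `a δ_w = 0` for all `w`: the vacuum is cyclic for
the right semicircular elements, hence separating for `M`.
-/

noncomputable section

/-- The Hilbert space `ℓ²(FreeMonoid (Fin N), ℂ)`. -/
abbrev FMH (N : ℕ) : Type := lp (fun _ : FreeMonoid (Fin N) => ℂ) 2

/-- The standard orthonormal basis vector `δ_w` at the word `w`. -/
noncomputable def delta (N : ℕ) (w : FreeMonoid (Fin N)) : FMH N :=
  letI : DecidableEq (FreeMonoid (Fin N)) := Classical.decEq _
  lp.single 2 w 1

/-- The set of the semicircular generators `L_j + L_j*`, `j = 1, …, N`. -/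
def semicircSet (N : ℕ) (L : FreeMonoid (Fin N) → (FMH N →L[ℂ] FMH N)) :
    Set (FMH N →L[ℂ] FMH N) :=
  {x | ∃ j : Fin N, x = L (FreeMonoid.of j) + ContinuousLinearMap.adjoint (L (FreeMonoid.of j))}

/-- The von Neumann algebra generated by `{L_j + L_j*}`: the double commutant of this
(self-adjoint) set inside the bounded operators on `H`. -/
def vnAlg (N : ℕ) (L : FreeMonoid (Fin N) → (FMH N →L[ℂ] FMH N)) :
    StarSubalgebra ℂ (FMH N →L[ℂ] FMH N) :=
  StarSubalgebra.centralizer ℂ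
    ((StarSubalgebra.centralizer ℂ (semicircSet N L) : StarSubalgebra ℂ (FMH N →L[ℂ] FMH N)) :
      Set (FMH N →L[ℂ] FMH N))

open scoped lp
open Function ContinuousLinearMap

namespace lp

variable {𝕜 ι ι' : Type*} [RCLike 𝕜]

theorem ext_single [DecidableEq ι] {F : Type*} [AddCommMonoid F] [Module 𝕜 F]
    [TopologicalSpace F] [T2Space F] {T S : ℓ²(ι, 𝕜) →L[𝕜] F}
    (h : ∀ v, T (lp.single 2 v 1) = S (lp.single 2 v 1)) : T = S :=
  lp.ext_continuousLinearMap ENNReal.ofNat_ne_top fun v => ContinuousLinearMap.ext_ring (h v)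

theorem memℓp_comp_injective {f : ι → ι'} (hf : Injective f) (x : ℓ²(ι', 𝕜)) :
    Memℓp (x ∘ f) 2 :=
  memℓp_gen <| ((lp.memℓp x).summable (by norm_num)).comp_injective hf

variable (𝕜) in
def comapL {f : ι → ι'} (hf : Injective f) : ℓ²(ι', 𝕜) →L[𝕜] ℓ²(ι, 𝕜) :=
  LinearMap.mkContinuous
    { toFun x := ⟨x ∘ f, memℓp_comp_injective hf x⟩
      map_add' _ _ := rfl
      map_smul' _ _ := rfl } 1
    fun x => by
      rw [one_mul]
      refine lp.norm_le_of_tsum_le (by norm_num) (norm_nonneg _) ?_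
      rw [lp.norm_rpow_eq_tsum (by norm_num)]
      exact tsum_comp_le_tsum_of_inj ((lp.memℓp x).summable (by norm_num))
        (fun _ => by positivity) hf

@[simp]
theorem comapL_apply {f : ι → ι'} (hf : Injective f) (x : ℓ²(ι', 𝕜)) (v : ι) :
    comapL 𝕜 hf x v = x (f v) := rfl

variable [DecidableEq ι']

theorem comapL_single_of_notMem_range {f : ι → ι'} (hf : Injective f) {w : ι'}
    (hw : w ∉ Set.range f) : comapL 𝕜 hf (lp.single 2 w (1 : 𝕜)) = 0 := by
  ext u
  simpa [Pi.single_apply] using fun h => hw ⟨u, h⟩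

variable [DecidableEq ι]

theorem comapL_single_self {f : ι → ι'} (hf : Injective f) (v : ι) :
    comapL 𝕜 hf (lp.single 2 (f v) (1 : 𝕜)) = lp.single 2 v 1 := by
  ext u
  simp [Pi.single_apply, hf.eq_iff]

theorem inner_single_one_left (v : ι) (x : ℓ²(ι, 𝕜)) : inner 𝕜 (lp.single 2 v 1) x = x v := by
  simp [lp.inner_single_left]

theorem adjoint_comapL_single {f : ι → ι'} (hf : Injective f) (v : ι) :
    adjoint (comapL 𝕜 hf) (lp.single 2 v (1 : 𝕜)) = lp.single 2 (f v) 1 := by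
  ext w
  rw [← inner_single_one_left, adjoint_inner_right]
  simp [lp.inner_single_right, Pi.single_apply, eq_comm]

theorem adjoint_eq_comapL {f : ι → ι'} (hf : Injective f) {A : ℓ²(ι, 𝕜) →L[𝕜] ℓ²(ι', 𝕜)}
    (hA : ∀ v, A (lp.single 2 v 1) = lp.single 2 (f v) 1) : adjoint A = comapL 𝕜 hf := by
  rw [ext_single fun v => (hA v).trans (adjoint_comapL_single hf v).symm,
    adjoint_adjoint]

end lp

theorem commute_add_star_add_star {R : Type*} [Ring R] [StarRing R] {a b : R}
    (hab : Commute a b) (h : IsSelfAdjoint (star a * b - b * star a)) :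
    Commute (a + star a) (b + star b) := by
  have hcross : star a * b + a * star b = star b * a + b * star a := by
    have := h.star_eq
    rw [star_sub, star_mul, star_mul, star_star, sub_eq_sub_iff_add_eq_add] at this
    exact this.symm
  calc (a + star a) * (b + star b) = a * b + star a * star b + (star a * b + a * star b) := by
        noncomm_ring
    _ = b * a + star b * star a + (star b * a + b * star a) := by
        rw [hab.eq, hab.star_star.eq, hcross]
    _ = (b + star b) * (a + star a) := by noncomm_ring

namespace FreeMonoid

variable {α : Type*}

theorem of_mul_eq_of_mul_iff {c i : α} {v u : FreeMonoid α} :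
    of c * v = of i * u ↔ c = i ∧ v = u := by
  rw [← toList.injective.eq_iff]; simp

theorem mul_of_eq_mul_of_iff {d j : α} {v u : FreeMonoid α} :
    v * of d = u * of j ↔ v = u ∧ d = j := by
  rw [← toList.injective.eq_iff]; simp [toList_mul, toList_of, List.append_singleton_inj]

theorem of_mul_ne_one (i : α) (u : FreeMonoid α) : of i * u ≠ 1 :=
  toList.injective.ne (List.cons_ne_nil _ _)

theorem mul_of_ne_one (u : FreeMonoid α) (j : α) : u * of j ≠ 1 :=
  toList.injective.ne (List.concat_ne_nil _ _)

variable (𝕜 : Type*) [RCLike 𝕜]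

def leftAnnihilation (i : α) : ℓ²(FreeMonoid α, 𝕜) →L[𝕜] ℓ²(FreeMonoid α, 𝕜) :=
  lp.comapL 𝕜 (mul_right_injective (of i))

def rightAnnihilation (j : α) : ℓ²(FreeMonoid α, 𝕜) →L[𝕜] ℓ²(FreeMonoid α, 𝕜) :=
  lp.comapL 𝕜 (mul_left_injective (of j))

def rightCreation (j : α) : ℓ²(FreeMonoid α, 𝕜) →L[𝕜] ℓ²(FreeMonoid α, 𝕜) :=
  adjoint (rightAnnihilation 𝕜 j)

theorem adjoint_rightCreation (j : α) : adjoint (rightCreation 𝕜 j) = rightAnnihilation 𝕜 j :=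
  adjoint_adjoint _

theorem commute_leftAnnihilation_rightAnnihilation (i j : α) :
    Commute (leftAnnihilation 𝕜 i) (rightAnnihilation 𝕜 j) := by
  ext x w
  simp [leftAnnihilation, rightAnnihilation, mul_assoc]

variable {𝕜} [DecidableEq (FreeMonoid α)]

theorem rightCreation_single (j : α) (w : FreeMonoid α) :
    rightCreation 𝕜 j (lp.single 2 w 1) = lp.single 2 (w * of j) 1 :=
  lp.adjoint_comapL_single _ w

theorem leftAnnihilation_single_one (i : α) :
    leftAnnihilation 𝕜 i (lp.single 2 1 1) = 0 :=
  lp.comapL_single_of_notMem_range _ fun ⟨u, hu⟩ => of_mul_ne_one i u hu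

theorem leftAnnihilation_single_of_mul [DecidableEq α] (i c : α) (v : FreeMonoid α) :
    leftAnnihilation 𝕜 i (lp.single 2 (of c * v) 1) = if c = i then lp.single 2 v 1 else 0 := by
  split_ifs with h
  · subst h; exact lp.comapL_single_self _ v
  · exact lp.comapL_single_of_notMem_range _ fun ⟨u, hu⟩ => h (of_mul_eq_of_mul_iff.1 hu).1.symm

theorem rightAnnihilation_single_one (j : α) :
    rightAnnihilation 𝕜 j (lp.single 2 1 1) = 0 :=
  lp.comapL_single_of_notMem_range _ fun ⟨u, hu⟩ => mul_of_ne_one u j hu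

theorem rightAnnihilation_single_mul_of [DecidableEq α] (j d : α) (v : FreeMonoid α) :
    rightAnnihilation 𝕜 j (lp.single 2 (v * of d) 1) = if d = j then lp.single 2 v 1 else 0 := by
  split_ifs with h
  · subst h; exact lp.comapL_single_self _ v
  · exact lp.comapL_single_of_notMem_range _ fun ⟨u, hu⟩ => h (mul_of_eq_mul_of_iff.1 hu).2.symm

theorem adjoint_eq_leftAnnihilation {i : α} {A : ℓ²(FreeMonoid α, 𝕜) →L[𝕜] ℓ²(FreeMonoid α, 𝕜)}
    (hA : ∀ w, A (lp.single 2 w 1) = lp.single 2 (of i * w) 1) :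
    adjoint A = leftAnnihilation 𝕜 i :=
  lp.adjoint_eq_comapL _ hA

theorem leftAnnihilation_mul_rightCreation_sub [DecidableEq α] (i j : α) :
    leftAnnihilation 𝕜 i * rightCreation 𝕜 j - rightCreation 𝕜 j * leftAnnihilation 𝕜 i =
      if i = j then InnerProductSpace.rankOne 𝕜 (lp.single 2 1 1) (lp.single 2 1 1) else 0 := by
  refine lp.ext_single fun w => ?_
  rw [sub_apply, mul_apply_eq_comp, mul_apply_eq_comp, rightCreation_single]
  cases w with
  | one =>
    rw [leftAnnihilation_single_one, map_zero, sub_zero, one_mul, ← mul_one (of j),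
      leftAnnihilation_single_of_mul]
    by_cases h : i = j
    · subst h; simp
    · simp [h, Ne.symm h]
  | of_mul c v =>
    rw [mul_assoc, leftAnnihilation_single_of_mul, leftAnnihilation_single_of_mul]
    split_ifs <;> simp [rightCreation_single, lp.inner_single_left]

theorem commute_add_adjoint_rightCreation [DecidableEq α] {i : α}
    {A : ℓ²(FreeMonoid α, 𝕜) →L[𝕜] ℓ²(FreeMonoid α, 𝕜)}
    (hA : ∀ w, A (lp.single 2 w 1) = lp.single 2 (of i * w) 1) (j : α) :
    Commute (A + adjoint A) (rightCreation 𝕜 j + adjoint (rightCreation 𝕜 j)) := by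
  simp only [← star_eq_adjoint]
  have hℓ : star A = leftAnnihilation 𝕜 i := adjoint_eq_leftAnnihilation hA
  refine commute_add_star_add_star ?_ ?_
  · simpa [← hℓ, rightCreation, ← star_eq_adjoint] using
      (commute_leftAnnihilation_rightAnnihilation (𝕜 := 𝕜) i j).star_star
  · rw [hℓ, leftAnnihilation_mul_rightCreation_sub]
    split_ifs
    · exact isSelfAdjoint_iff'.2 (InnerProductSpace.adjoint_rankOne _ _)
    · exact .zero _

theorem eq_zero_of_commute_of_apply_single_one [DecidableEq α]
    {a : ℓ²(FreeMonoid α, 𝕜) →L[𝕜] ℓ²(FreeMonoid α, 𝕜)}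
    (hcomm : ∀ j, Commute a (rightCreation 𝕜 j + adjoint (rightCreation 𝕜 j)))
    (ha : a (lp.single 2 1 1) = 0) : a = 0 := by
  simp only [adjoint_rightCreation] at hcomm
  have key : ∀ w, a (lp.single 2 w 1) = 0 ∧ ∀ j, a (rightAnnihilation 𝕜 j (lp.single 2 w 1)) = 0 := by
    intro w
    obtain ⟨l, rfl⟩ := ofList.surjective w
    induction l using List.reverseRecOn with
    | nil => exact ⟨ha, fun j => by rw [ofList_nil, rightAnnihilation_single_one, map_zero]⟩
    | append_singleton l d ih =>
      rw [ofList_append, ofList_singleton]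
      refine ⟨?_, fun j => ?_⟩
      · have hsplit : lp.single 2 (ofList l * of d) (1 : 𝕜) =
            (rightCreation 𝕜 d + rightAnnihilation 𝕜 d) (lp.single 2 (ofList l) 1) -
              rightAnnihilation 𝕜 d (lp.single 2 (ofList l) 1) := by
          simp [rightCreation_single]
        rw [hsplit, map_sub, ← mul_apply_eq_comp, (hcomm d).eq, mul_apply_eq_comp, ih.1, ih.2,
          map_zero, sub_zero]
      · rw [rightAnnihilation_single_mul_of]
        split_ifs
        · exact ih.1
        · exact map_zero a
  exact lp.ext_single fun w => (key w).1

end FreeMonoid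

theorem delta_eq_single {N : ℕ} [DecidableEq (FreeMonoid (Fin N))] (w : FreeMonoid (Fin N)) :
    delta N w = lp.single 2 w 1 := by
  unfold delta
  congr
  exact Subsingleton.elim _ _

theorem vacuum_state_faithful (N : ℕ)
    (L : FreeMonoid (Fin N) → (FMH N →L[ℂ] FMH N))
    (hL : ∀ w h : FreeMonoid (Fin N), L w (delta N h) = delta N (w * h))
    (a : FMH N →L[ℂ] FMH N) (ha : a ∈ vnAlg N L)
    (h0 : (inner ℂ (((ContinuousLinearMap.adjoint a).comp a) (delta N 1)) (delta N 1) : ℂ) = 0) :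
    a = 0 := by
  classical
  rw [ContinuousLinearMap.comp_apply, adjoint_inner_left, inner_self_eq_zero, delta_eq_single] at h0
  refine FreeMonoid.eq_zero_of_commute_of_apply_single_one (fun j => ?_) h0
  have hR : FreeMonoid.rightCreation ℂ j + adjoint (FreeMonoid.rightCreation ℂ j) ∈
      StarSubalgebra.centralizer ℂ (semicircSet N L) := by
    rw [StarSubalgebra.mem_centralizer_iff]
    rintro _ ⟨i, rfl⟩
    have hc := FreeMonoid.commute_add_adjoint_rightCreation
      (fun w => by simpa only [delta_eq_single] using hL (.of i) w) j
    rw [← star_eq_adjoint, (IsSelfAdjoint.add_star_self _).star_eq]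
    exact ⟨hc.eq, hc.eq⟩
  exact ((StarSubalgebra.mem_centralizer_iff ℂ).1 ha _ hR).1.symm
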